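/- For all U, V, W in the free module V spanned by plane rooted trees, U ▶ (V·W) = (U▶V)·W + V·(U▶W) − V·((U▶•)·W), where • is the one-vertex plane tree. -/

import Mathlib

/-- Plane rooted trees: a root with a linearly ordered list of subtrees. -/
inductive PTree
  | node : List PTree → PTree

/-- The list of subtrees of the root. -/
def PTree.children : PTree → List PTree
  | .node cs => cs

/-- `prodAux us t` lists (with multiplicity) the trees obtained by grafting the forest `us`
along the leftmost branch of `t`: the forest is cut into consecutive blocks, the k-th block
being grafted at the k-th vertex of the leftmost branch, immediately to the left of the next
vertex of the branch, the last block becoming the children of the end of the branch. -/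
def prodAux : List PTree → PTree → List PTree
  | us, .node [] => [.node us]
  | us, .node (c :: cs) =>
    (List.range (us.length + 1)).flatMap fun j =>
      (prodAux (us.drop j) c).map fun c' => .node (us.take j ++ c' :: cs)

mutual
/-- All ways (with multiplicity) of inserting the tree `s` as a new subtree at some vertex of
`t`, at some position among the ordered children of that vertex. -/
def graftT (s : PTree) : PTree → List PTree
  | .node cs => (graftF s cs).map PTree.node

/-- All ways (with multiplicity) of inserting the tree `s` at some vertex of a forest. -/
def graftF (s : PTree) : List PTree → List (List PTree)
  | [] => [[s]]
  | c :: cs =>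
    (s :: c :: cs) :: ((graftT s c).map (· :: cs) ++ (graftF s cs).map (c :: ·))
end

/-- The free ℚ-module with basis the plane rooted trees. -/
abbrev VT := PTree →₀ ℚ

/-- The sum in `VT` of a list of trees (with multiplicity). -/
noncomputable def listToVT (l : List PTree) : VT :=
  (l.map fun t => Finsupp.single t (1 : ℚ)).sum

/-- The product of the Loday–Ronco algebra PBT in its P-basis, indexed by plane trees,
extended bilinearly. -/
noncomputable def pbtMul (x y : VT) : VT :=
  x.sum fun t1 a => y.sum fun t2 b => (a * b) • listToVT (prodAux t1.children t2)

/-- The grafting operation ▶, extended bilinearly. -/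
noncomputable def graftMul (x y : VT) : VT :=
  x.sum fun s a => y.sum fun t b => (a * b) • listToVT (graftT s t)

/-- The one-vertex plane tree • as an element of VT. -/
noncomputable def oneVertex : VT := Finsupp.single (PTree.node []) 1

/-! Both sides are trilinear, so it suffices to treat trees `U = s`, `V = node us`, `W = t`.
Since `s ▶ • = node [s]`, the identity then says that the multisets of trees
`s ▶ (V·t) + V·(node [s]·t)` and `(s ▶ V)·t + V·(s ▶ t)` agree. This is proved by induction
on `t`. For `t = node (c :: cs)`, the trees of `V·t` are the `node (p ++ c' :: cs)` with
`us = p ++ q` and `c' ∈ node q · c`. Grafting `s` into such a tree puts it into `p`, into `c'`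
or into `cs`: the first and last cases are terms of `(s ▶ V)·t` and of `V·(s ▶ t)`. The middle
case, together with the part of `V·(node [s]·t)` in which `s` sits inside `c`, is exchanged by
the induction hypothesis for `c` and `node q` against the remaining terms of `(s ▶ V)·t` and
`V·(s ▶ t)`, apart from `V·node (s :: c :: cs)`, which occurs once on each side. -/

namespace List

variable {α : Type*}

def splits (l : List α) : List (List α × List α) := l.inits.zip l.tails

@[simp] lemma splits_nil : splits ([] : List α) = [([], [])] := rfl

@[simp] lemma splits_cons (a : α) (l : List α) :
    splits (a :: l) = ([], a :: l) :: (splits l).map fun pq => (a :: pq.1, pq.2) := by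
  simp [splits, zip_map_left]

lemma splits_eq_map_range (l : List α) :
    l.splits = (range (l.length + 1)).map fun j => (l.take j, l.drop j) := by
  induction l with
  | nil => rfl
  | cons a l ih => simp [range_succ_eq_map, ih, Function.comp_def]

end List

open List

lemma graftT_node (s : PTree) (cs : List PTree) :
    graftT s (.node cs) = (graftF s cs).map .node := by
  rw [graftT]

@[simp] lemma graftF_nil (s : PTree) : graftF s [] = [[s]] := by
  rw [graftF]

lemma graftF_cons (s c : PTree) (cs : List PTree) :
    graftF s (c :: cs) =
      (s :: c :: cs) :: ((graftT s c).map (· :: cs) ++ (graftF s cs).map (c :: ·)) := by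
  rw [graftF]

@[simp] lemma prodAux_leaf (us : List PTree) : prodAux us (.node []) = [.node us] := by
  rw [prodAux]

lemma prodAux_node_cons (us : List PTree) (c : PTree) (cs : List PTree) :
    prodAux us (.node (c :: cs)) =
      us.splits.flatMap fun pq => (prodAux pq.2 c).map fun c' => .node (pq.1 ++ c' :: cs) := by
  rw [prodAux, splits_eq_map_range, flatMap_map]

@[simp] lemma prodAux_nil_left : ∀ t : PTree, prodAux [] t = [t]
  | .node [] => prodAux_leaf []
  | .node (c :: cs) => by simp [prodAux_node_cons, prodAux_nil_left c]

lemma graftF_append (s : PTree) (xs ys : List PTree) :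
    graftF s (xs ++ ys) ++ [xs ++ s :: ys] ~
      (graftF s xs).map (· ++ ys) ++ (graftF s ys).map (xs ++ ·) := by
  induction xs with
  | nil => simp
  | cons x xs ih =>
    simpa [graftF_cons, Function.comp_def] using
      ((ih.map (x :: ·)).append_left ((graftT s x).map (· :: xs ++ ys))).cons (s :: x :: xs ++ ys)

lemma graftF_splits (s : PTree) (us : List PTree) :
    (graftF s us).flatMap splits ~ us.splits.flatMap fun pq =>
      (graftF s pq.1).map (·, pq.2) ++ (graftF s pq.2).map (pq.1, ·) := by
  induction us with
  | nil => exact .swap _ _ _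
  | cons u vs ih =>
    rw [← Multiset.coe_eq_coe] at ih ⊢
    have := congrArg (Multiset.map fun pq => (u :: pq.1, pq.2)) ih
    simp only [← Multiset.coe_add, ← Multiset.map_coe, ← Multiset.coe_bind, Multiset.map_bind,
      Multiset.map_add, Multiset.map_map, Function.comp_def] at this
    simp only [graftF_cons, splits_cons, graftF_nil, ← Multiset.coe_add, ← Multiset.cons_coe,
      ← Multiset.map_coe, ← Multiset.coe_bind, Multiset.cons_bind, Multiset.add_bind,
      Multiset.bind_map, Multiset.map_map, Function.comp_def, Multiset.bind_add,
      Multiset.map_cons, Multiset.map_add, Multiset.bind_cons, this]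
    rw [Multiset.bind_map_comm (graftT s u : Multiset PTree)]
    simp only [← Multiset.singleton_add, Multiset.coe_nil, Multiset.map_zero, add_zero]
    abel

lemma graftT_node_append_cons (s t : PTree) (p cs : List PTree) :
    graftT s (.node (p ++ t :: cs)) ~
      (graftF s p).map (fun zs => .node (zs ++ t :: cs)) ++
        (graftT s t).map (fun g => .node (p ++ g :: cs)) ++
        (graftF s cs).map (fun zs => .node (p ++ t :: zs)) := by
  have h := (graftF_append s p (t :: cs)).map PTree.node
  rw [← Multiset.coe_eq_coe] at h ⊢
  simp only [graftF_cons, map_append, map_cons, map_map, Function.comp_def, map_nil,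
    ← Multiset.coe_add, ← Multiset.cons_coe, ← Multiset.singleton_add, Multiset.coe_nil,
    add_zero] at h
  rw [graftT_node, ← add_right_cancel_iff (a := {.node (p ++ s :: t :: cs)}),
    ← Multiset.coe_add, ← Multiset.coe_add, h]
  abel

lemma graftT_prodAux_step (s c : PTree) (p q cs : List PTree)
    (ih : (prodAux q c).flatMap (graftT s) ++ (prodAux [s] c).flatMap (prodAux q) ~
      (graftF s q).flatMap (prodAux · c) ++ (graftT s c).flatMap (prodAux q)) :
    (prodAux q c).flatMap (fun c' => graftT s (.node (p ++ c' :: cs))) ++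
        ((prodAux [s] c).flatMap (prodAux q)).map (fun e => .node (p ++ e :: cs)) ~
      (graftF s p).flatMap (fun zs => (prodAux q c).map fun c' => .node (zs ++ c' :: cs)) ++
        ((graftF s q).flatMap (prodAux · c) ++ (graftT s c).flatMap (prodAux q)).map
          (fun e => .node (p ++ e :: cs)) ++
        (graftF s cs).flatMap (fun zs => (prodAux q c).map fun c' => .node (p ++ c' :: zs)) := by
  have hroot := Perm.flatMap_left (prodAux q c) fun c' _ => graftT_node_append_cons s c' p cs
  have hc := ih.map fun e => PTree.node (p ++ e :: cs)
  rw [← Multiset.coe_eq_coe] at hroot hc ⊢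
  simp only [← Multiset.coe_add, ← Multiset.map_coe, ← Multiset.coe_bind, Multiset.bind_add,
    Multiset.map_add, Multiset.map_bind] at hroot hc ⊢
  rw [hroot,
    Multiset.bind_map_comm (prodAux q c : Multiset PTree) (graftF s p : Multiset (List PTree)),
    Multiset.bind_map_comm (prodAux q c : Multiset PTree) (graftF s cs : Multiset (List PTree)),
    ← hc]
  abel

theorem graftT_prodAux (s : PTree) : ∀ (t : PTree) (us : List PTree),
    (prodAux us t).flatMap (graftT s) ++ (prodAux [s] t).flatMap (prodAux us) ~
      (graftF s us).flatMap (prodAux · t) ++ (graftT s t).flatMap (prodAux us)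
  | .node [], us => by simp [graftT_node, ← map_eq_flatMap]
  | .node (c :: cs), us => by
    -- Every term becomes a sum over the splittings `us = p ++ q`, and the summands are
    -- compared by `graftT_prodAux_step`; `prodAux us (.node (s :: c :: cs))` is on both sides.
    have step := Multiset.bind_congr (m := (us.splits : Multiset (List PTree × List PTree)))
      fun pq _ => Multiset.coe_eq_coe.mpr
        (graftT_prodAux_step s c pq.1 pq.2 cs (graftT_prodAux s c pq.2))
    have hsplit := graftF_splits s us
    rw [← Multiset.coe_eq_coe] at hsplit ⊢
    simp only [← Multiset.coe_add, ← Multiset.map_coe, ← Multiset.coe_bind, Multiset.bind_add,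
      Multiset.map_add, Multiset.map_bind] at step hsplit
    rw [graftT_node s (c :: cs), graftF_cons]
    simp only [prodAux_node_cons, splits_cons, splits_nil, prodAux_nil_left, cons_append,
      nil_append, map_cons, map_append, map_map, Function.comp_def, ← Multiset.coe_add,
      ← Multiset.map_coe, ← Multiset.coe_bind, ← Multiset.cons_coe, Multiset.coe_nil,
      Multiset.bind_assoc, Multiset.bind_map, Multiset.add_bind, Multiset.cons_bind,
      Multiset.zero_bind, Multiset.map_cons, add_zero]
    rw [Multiset.bind_bind (prodAux [s] c : Multiset PTree),
      Multiset.bind_bind (graftT s c : Multiset PTree),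
      Multiset.bind_bind (graftF s cs : Multiset (List PTree)), ← Multiset.bind_assoc, hsplit]
    simp only [Multiset.add_bind, Multiset.bind_assoc, Multiset.bind_map]
    rw [← add_assoc, step]
    abel

open Finsupp

lemma listToVT_append (l l' : List PTree) : listToVT (l ++ l') = listToVT l + listToVT l' := by
  simp [listToVT]

lemma listToVT_singleton (t : PTree) : listToVT [t] = single t 1 := by
  simp [listToVT]

lemma List.Perm.listToVT_eq {l l' : List PTree} (h : l ~ l') : listToVT l = listToVT l' :=
  (h.map _).sum_eq

lemma map_listToVT {F : Type*} [FunLike F VT VT] [AddMonoidHomClass F VT VT] (φ : F)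
    (f : PTree → List PTree) (hφ : ∀ t, φ (single t 1) = listToVT (f t)) (l : List PTree) :
    φ (listToVT l) = listToVT (l.flatMap f) := by
  induction l with
  | nil => simp [listToVT]
  | cons t l ih =>
    rw [flatMap_cons, listToVT_append, ← ih, ← hφ, ← map_add, ← listToVT_singleton,
      ← listToVT_append, singleton_append]

noncomputable def bilinOfLists (g : PTree → PTree → List PTree) : VT →ₗ[ℚ] VT →ₗ[ℚ] VT :=
  Finsupp.lsum ℚ fun t₁ => LinearMap.smulRight LinearMap.id
    (Finsupp.lsum ℚ fun t₂ => LinearMap.smulRight LinearMap.id (listToVT (g t₁ t₂)))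

lemma bilinOfLists_apply (g : PTree → PTree → List PTree) (x y : VT) :
    bilinOfLists g x y = x.sum fun t₁ a => y.sum fun t₂ b => (a * b) • listToVT (g t₁ t₂) := by
  simp [bilinOfLists, Finsupp.smul_sum, mul_smul]

lemma bilinOfLists_single (g : PTree → PTree → List PTree) (t₁ t₂ : PTree) :
    bilinOfLists g (single t₁ 1) (single t₂ 1) = listToVT (g t₁ t₂) := by
  simp [bilinOfLists]

lemma bilinOfLists_single_listToVT (g : PTree → PTree → List PTree) (t : PTree)
    (l : List PTree) : bilinOfLists g (single t 1) (listToVT l) = listToVT (l.flatMap (g t)) :=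
  map_listToVT _ _ (bilinOfLists_single g t) l

lemma bilinOfLists_listToVT_single (g : PTree → PTree → List PTree) (l : List PTree)
    (t : PTree) : bilinOfLists g (listToVT l) (single t 1) = listToVT (l.flatMap (g · t)) :=
  map_listToVT ((bilinOfLists g).flip (single t 1)) _ (bilinOfLists_single g · t) l

lemma pbtMul_eq_bilinOfLists (x y : VT) :
    pbtMul x y = bilinOfLists (fun t₁ => prodAux t₁.children) x y :=
  (bilinOfLists_apply _ x y).symm

lemma graftMul_eq_bilinOfLists (x y : VT) : graftMul x y = bilinOfLists graftT x y :=
  (bilinOfLists_apply _ x y).symm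

lemma graftMul_single_oneVertex (s : PTree) :
    graftMul (single s 1) oneVertex = single (.node [s]) 1 := by
  rw [graftMul_eq_bilinOfLists, oneVertex, bilinOfLists_single, graftT_node, graftF_nil]
  exact listToVT_singleton _

lemma graftMul_pbtMul_single (s t₁ t₂ : PTree) :
    graftMul (single s 1) (pbtMul (single t₁ 1) (single t₂ 1)) =
      pbtMul (graftMul (single s 1) (single t₁ 1)) (single t₂ 1) +
        pbtMul (single t₁ 1) (graftMul (single s 1) (single t₂ 1)) -
        pbtMul (single t₁ 1) (pbtMul (graftMul (single s 1) oneVertex) (single t₂ 1)) := by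
  obtain ⟨us⟩ := t₁
  rw [graftMul_single_oneVertex]
  simp only [pbtMul_eq_bilinOfLists, graftMul_eq_bilinOfLists, bilinOfLists_single,
    bilinOfLists_single_listToVT, bilinOfLists_listToVT_single, PTree.children, graftT_node,
    flatMap_map]
  rw [eq_sub_iff_add_eq, ← listToVT_append, ← listToVT_append]
  exact (graftT_prodAux s t₂ us).listToVT_eq

theorem stmt16 : ∀ U V W : VT,
    graftMul U (pbtMul V W)
      = pbtMul (graftMul U V) W + pbtMul V (graftMul U W)
        - pbtMul V (pbtMul (graftMul U oneVertex) W) := by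
  intro U V W
  simp only [pbtMul_eq_bilinOfLists, graftMul_eq_bilinOfLists]
  induction U using Finsupp.induction_linear with
  | zero => simp
  | add U₁ U₂ h₁ h₂ => simp only [map_add, LinearMap.add_apply, h₁, h₂]; abel
  | single s a =>
    induction V using Finsupp.induction_linear with
    | zero => simp
    | add V₁ V₂ h₁ h₂ => simp only [map_add, LinearMap.add_apply, h₁, h₂]; abel
    | single t₁ b =>
      induction W using Finsupp.induction_linear with
      | zero => simp
      | add W₁ W₂ h₁ h₂ => simp only [map_add, h₁, h₂]; abel
      | single t₂ c =>
        have h := graftMul_pbtMul_single s t₁ t₂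
        simp only [pbtMul_eq_bilinOfLists, graftMul_eq_bilinOfLists] at h
        rw [← smul_single_one s a, ← smul_single_one t₁ b, ← smul_single_one t₂ c]
        simp only [map_smul, LinearMap.smul_apply]
        linear_combination (norm := module) (a * b * c) • h
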